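/- For any optimal joint path u* in the joint state graph, there exists a path on the Critical Joint State Graph with the same total cost; consequently the optimal path u† found via the CJSG satisfies Q(u†) ≤ Q(u*). -/
import Mathlib


open scoped Classical

variable {V : Type}

/-- A path from `a` to `b` given as a list of edges (vertex pairs). -/
def IsPath (adj : V → V → Prop) : V → V → List (V × V) → Prop
  | a, b, [] => a = b
  | a, b, e :: p => e.1 = a ∧ adj e.1 e.2 ∧ IsPath adj e.2 b p

/-- Cost of a path: sum of its edge costs. -/
noncomputable def pathCost (c : V → V → ℝ) (p : List (V × V)) : ℝ :=
  (p.map fun e => c e.1 e.2).sum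

/-- ψ a b : minimum cost to move from a to b on the base graph. -/
noncomputable def psi (adj : V → V → Prop) (c : V → V → ℝ) (a b : V) : ℝ :=
  sInf {x | ∃ p, IsPath adj a b p ∧ pathCost c p = x}

/-- The base graph is strongly connected. -/
def StronglyConnected (adj : V → V → Prop) : Prop :=
  ∀ a b : V, ∃ p, IsPath adj a b p

/-- JSG adjacency: each agent either stays at its node or moves along an edge. -/
def jsgAdj (adj : V → V → Prop) (s t : V × V) : Prop :=
  (t.1 = s.1 ∨ adj s.1 t.1) ∧ (t.2 = s.2 ∨ adj s.2 t.2)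

/-- Support-aware JSG edge cost (Algorithm 1): if one agent stays at a support
node of the risky edge the other traverses, the cost is
`min {c, c̄ + c_s}`; otherwise costs of individual moves are summed. -/
noncomputable def jsgCost (c cbar : V → V → ℝ) (cs : ℝ) (Z : V → V → Set V)
    (s t : V × V) : ℝ :=
  if s.1 = t.1 ∧ s.2 = t.2 then 0
  else if s.1 = t.1 then
    (if s.1 ∈ Z s.2 t.2 then min (c s.2 t.2) (cbar s.2 t.2 + cs) else c s.2 t.2)
  else if s.2 = t.2 then
    (if s.2 ∈ Z s.1 t.1 then min (c s.1 t.1) (cbar s.1 t.1 + cs) else c s.1 t.1)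
  else c s.1 t.1 + c s.2 t.2

/-- Cost Q(u) of a joint path u in the JSG. -/
noncomputable def Q (c cbar : V → V → ℝ) (cs : ℝ) (Z : V → V → Set V)
    (u : List ((V × V) × (V × V))) : ℝ :=
  (u.map fun e => jsgCost c cbar cs Z e.1 e.2).sum

/-- Shortest-path cost in the JSG between two joint states. -/
noncomputable def jsgDist (adj : V → V → Prop) (c cbar : V → V → ℝ) (cs : ℝ)
    (Z : V → V → Set V) (s t : V × V) : ℝ :=
  sInf {x | ∃ u, IsPath (jsgAdj adj) s t u ∧ Q c cbar cs Z u = x}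

/-- A risky edge: an edge with a nonempty support set. -/
def Risky (adj : V → V → Prop) (Z : V → V → Set V) (i j : V) : Prop :=
  adj i j ∧ (Z i j).Nonempty

/-- Critical joint states: joint states where a supporting behavior
can be initiated or completed. -/
def Critical (adj : V → V → Prop) (Z : V → V → Set V) (s : V × V) : Prop :=
  ∃ i j k, Risky adj Z i j ∧ k ∈ Z i j ∧
    (s = (k, i) ∨ s = (k, j) ∨ s = (i, k) ∨ s = (j, k))

/-- Node set of the CJSG: all critical joint states plus start and goal. -/
def Mset (adj : V → V → Prop) (Z : V → V → Set V) (vstart vgoal : V) :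
    Set (V × V) :=
  {s | Critical adj Z s} ∪ {(vstart, vstart), (vgoal, vgoal)}

/-- The CJSG is fully connected on its node set. -/
def cjsgAdj (adj : V → V → Prop) (Z : V → V → Set V) (vstart vgoal : V)
    (s t : V × V) : Prop :=
  s ∈ Mset adj Z vstart vgoal ∧ t ∈ Mset adj Z vstart vgoal

/-- CJSG edge cost (Algorithm 2): supported cost when applicable, vs the
decoupled two-agent shortest-path cost `R = ψ + ψ`. -/
noncomputable def W (adj : V → V → Prop) (c cbar : V → V → ℝ) (cs : ℝ)
    (Z : V → V → Set V) (s t : V × V) : ℝ :=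
  if s.1 = t.1 ∧ adj s.2 t.2 ∧ s.1 ∈ Z s.2 t.2 then
    min (cbar s.2 t.2 + cs) (psi adj c s.1 t.1 + psi adj c s.2 t.2)
  else if s.2 = t.2 ∧ adj s.1 t.1 ∧ s.2 ∈ Z s.1 t.1 then
    min (cbar s.1 t.1 + cs) (psi adj c s.1 t.1 + psi adj c s.2 t.2)
  else psi adj c s.1 t.1 + psi adj c s.2 t.2

/-- Cost of a path on the CJSG. -/
noncomputable def Wcost (adj : V → V → Prop) (c cbar : V → V → ℝ) (cs : ℝ)
    (Z : V → V → Set V) (u : List ((V × V) × (V × V))) : ℝ :=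
  (u.map fun e => W adj c cbar cs Z e.1 e.2).sum

/-- Optimal joint-path cost Q(u*) on the JSG from start to goal. -/
noncomputable def Qstar (adj : V → V → Prop) (c cbar : V → V → ℝ) (cs : ℝ)
    (Z : V → V → Set V) (vstart vgoal : V) : ℝ :=
  jsgDist adj c cbar cs Z (vstart, vstart) (vgoal, vgoal)

/-- Optimal path cost obtained by planning on the CJSG from start to goal. -/
noncomputable def cjsgOpt (adj : V → V → Prop) (c cbar : V → V → ℝ) (cs : ℝ)
    (Z : V → V → Set V) (vstart vgoal : V) : ℝ :=
  sInf {x | ∃ u, IsPath (cjsgAdj adj Z vstart vgoal)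
    (vstart, vstart) (vgoal, vgoal) u ∧ Wcost adj c cbar cs Z u = x}


section Helpers

variable {adj : V → V → Prop} {c cbar : V → V → ℝ} {cs : ℝ} {Z : V → V → Set V}

lemma isPath_append : ∀ (p : List (V × V)) {a b d : V} (q : List (V × V)),
    IsPath adj a b p → IsPath adj b d q → IsPath adj a d (p ++ q) := by
  intro p
  induction p with
  | nil =>
    intro a b d q h hq
    have h' : a = b := h
    subst h'
    exact hq
  | cons e p ih =>
    intro a b d q h hq
    obtain ⟨h1, h2, h3⟩ := h
    exact ⟨h1, h2, ih q h3 hq⟩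

lemma pathCost_cons (e : V × V) (p : List (V × V)) :
    pathCost c (e :: p) = c e.1 e.2 + pathCost c p := by simp [pathCost]

lemma pathCost_append (p q : List (V × V)) :
    pathCost c (p ++ q) = pathCost c p + pathCost c q := by simp [pathCost]

lemma pathCost_nonneg (hc : ∀ i j, 0 ≤ c i j) (p : List (V × V)) :
    0 ≤ pathCost c p := by
  refine List.sum_nonneg ?_
  intro x hx
  simp only [List.mem_map] at hx
  obtain ⟨e, -, rfl⟩ := hx
  exact hc _ _

lemma psi_bdd (hc : ∀ i j, 0 ≤ c i j) (a b : V) :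
    BddBelow {x | ∃ p, IsPath adj a b p ∧ pathCost c p = x} := by
  refine ⟨0, ?_⟩
  rintro x ⟨p, -, rfl⟩
  exact pathCost_nonneg hc p

lemma psi_le_cost (hc : ∀ i j, 0 ≤ c i j) {a b : V} {p : List (V × V)}
    (h : IsPath adj a b p) : psi adj c a b ≤ pathCost c p :=
  csInf_le (psi_bdd hc a b) ⟨p, h, rfl⟩

lemma psi_nonneg (hc : ∀ i j, 0 ≤ c i j) {a b : V}
    (hne : ∃ p, IsPath adj a b p) : 0 ≤ psi adj c a b := by
  obtain ⟨p, hp⟩ := hne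
  refine le_csInf ⟨_, p, hp, rfl⟩ ?_
  rintro x ⟨q, -, rfl⟩
  exact pathCost_nonneg hc q

lemma psi_self (hc : ∀ i j, 0 ≤ c i j) (a : V) : psi adj c a a = 0 := by
  refine le_antisymm ?_ (psi_nonneg hc ⟨[], rfl⟩)
  have h := psi_le_cost (adj := adj) hc (show IsPath adj a a [] from rfl)
  simpa [pathCost] using h

lemma psi_le_edge (hc : ∀ i j, 0 ≤ c i j) {a b : V} (h : adj a b) :
    psi adj c a b ≤ c a b := by
  have hp : IsPath adj a b [(a, b)] := ⟨rfl, h, rfl⟩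
  have h2 := psi_le_cost hc hp
  simpa [pathCost] using h2

lemma le_sInf_add_sInf {A B : Set ℝ} {d : ℝ} (hA : A.Nonempty) (hB : B.Nonempty)
    (h : ∀ a ∈ A, ∀ b ∈ B, d ≤ a + b) : d ≤ sInf A + sInf B := by
  have h1 : ∀ b ∈ B, d - b ≤ sInf A := by
    intro b hb
    refine le_csInf hA fun a ha => ?_
    have := h a ha b hb; linarith
  have h2 : d - sInf A ≤ sInf B := by
    refine le_csInf hB fun b hb => ?_
    have := h1 b hb; linarith
  linarith

lemma psi_triangle (hc : ∀ i j, 0 ≤ c i j) {a b d : V}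
    (hab : ∃ p, IsPath adj a b p) (hbd : ∃ p, IsPath adj b d p) :
    psi adj c a d ≤ psi adj c a b + psi adj c b d := by
  obtain ⟨p0, hp0⟩ := hab
  obtain ⟨q0, hq0⟩ := hbd
  simp only [psi]
  refine le_sInf_add_sInf ⟨_, p0, hp0, rfl⟩ ⟨_, q0, hq0, rfl⟩ ?_
  rintro x ⟨p, hp, rfl⟩ y ⟨q, hq, rfl⟩
  have h2 := psi_le_cost hc (isPath_append p q hp hq)
  rw [pathCost_append] at h2
  exact h2

lemma jsgCost_nonneg (hc : ∀ i j, 0 ≤ c i j) (hcbar : ∀ i j, 0 ≤ cbar i j)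
    (hcs : 0 ≤ cs) (s t : V × V) : 0 ≤ jsgCost c cbar cs Z s t := by
  unfold jsgCost
  split_ifs <;>
    first
      | exact le_refl 0
      | exact le_min (hc _ _) (add_nonneg (hcbar _ _) hcs)
      | exact hc _ _
      | exact add_nonneg (hc _ _) (hc _ _)

lemma jsgCost_fst_le (hc : ∀ i j, 0 ≤ c i j) (x x' y : V) :
    jsgCost c cbar cs Z (x, y) (x', y) ≤ c x x' := by
  unfold jsgCost
  split_ifs with h1 h2 h2' h3 h3'
  · exact hc _ _
  · exact absurd ⟨h2, rfl⟩ h1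
  · exact absurd ⟨h2, rfl⟩ h1
  · exact min_le_left _ _
  · exact le_rfl
  · exact absurd rfl h3

lemma jsgCost_snd_le (hc : ∀ i j, 0 ≤ c i j) (x y y' : V) :
    jsgCost c cbar cs Z (x, y) (x, y') ≤ c y y' := by
  unfold jsgCost
  split_ifs with h1 h2 h2' h3 h3'
  · exact hc _ _
  · exact min_le_left _ _
  · exact le_rfl
  · exact absurd rfl h2
  · exact absurd rfl h2
  · exact absurd rfl h2

lemma lift_fst (hc : ∀ i j, 0 ≤ c i j) :
    ∀ (p : List (V × V)) {a b : V} (y : V), IsPath adj a b p →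
      IsPath (jsgAdj adj) (a, y) (b, y) (p.map fun e => ((e.1, y), (e.2, y))) ∧
      pathCost (jsgCost c cbar cs Z) (p.map fun e => ((e.1, y), (e.2, y))) ≤
        pathCost c p := by
  intro p
  induction p with
  | nil =>
    intro a b y h
    have h' : a = b := h
    subst h'
    exact ⟨rfl, le_rfl⟩
  | cons e p ih =>
    intro a b y h
    obtain ⟨h1, h2, h3⟩ := h
    subst h1
    obtain ⟨hp, hcost⟩ := ih y h3
    constructor
    · exact ⟨rfl, ⟨Or.inr h2, Or.inl rfl⟩, hp⟩
    · rw [List.map_cons, pathCost_cons, pathCost_cons]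
      exact add_le_add (jsgCost_fst_le hc _ _ _) hcost

lemma lift_snd (hc : ∀ i j, 0 ≤ c i j) :
    ∀ (p : List (V × V)) {a b : V} (x : V), IsPath adj a b p →
      IsPath (jsgAdj adj) (x, a) (x, b) (p.map fun e => ((x, e.1), (x, e.2))) ∧
      pathCost (jsgCost c cbar cs Z) (p.map fun e => ((x, e.1), (x, e.2))) ≤
        pathCost c p := by
  intro p
  induction p with
  | nil =>
    intro a b x h
    have h' : a = b := h
    subst h'
    exact ⟨rfl, le_rfl⟩
  | cons e p ih =>
    intro a b x h
    obtain ⟨h1, h2, h3⟩ := h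
    subst h1
    obtain ⟨hp, hcost⟩ := ih x h3
    constructor
    · exact ⟨rfl, ⟨Or.inl rfl, Or.inr h2⟩, hp⟩
    · rw [List.map_cons, pathCost_cons, pathCost_cons]
      exact add_le_add (jsgCost_snd_le hc _ _ _) hcost

lemma joint_exists (hconn : StronglyConnected adj) (hc : ∀ i j, 0 ≤ c i j)
    (s t : V × V) : ∃ u, IsPath (jsgAdj adj) s t u := by
  obtain ⟨p1, hp1⟩ := hconn s.1 t.1
  obtain ⟨p2, hp2⟩ := hconn s.2 t.2
  have h1 := (lift_fst (c := c) (cbar := c) (cs := 0) (Z := fun _ _ => ∅) hc p1 s.2 hp1).1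
  have h2 := (lift_snd (c := c) (cbar := c) (cs := 0) (Z := fun _ _ => ∅) hc p2 t.1 hp2).1
  exact ⟨_, isPath_append _ _ h1 h2⟩

lemma jsgDist_eq_psi :
    jsgDist adj c cbar cs Z = psi (jsgAdj adj) (jsgCost c cbar cs Z) := rfl

lemma jsgDist_le_psi_add (hconn : StronglyConnected adj) (hc : ∀ i j, 0 ≤ c i j)
    (hcbar : ∀ i j, 0 ≤ cbar i j) (hcs : 0 ≤ cs) (s t : V × V) :
    jsgDist adj c cbar cs Z s t ≤ psi adj c s.1 t.1 + psi adj c s.2 t.2 := by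
  have hJ := jsgCost_nonneg (c := c) (cbar := cbar) (cs := cs) (Z := Z) hc hcbar hcs
  obtain ⟨s1, s2⟩ := s
  obtain ⟨t1, t2⟩ := t
  obtain ⟨p0, hp0⟩ := hconn s1 t1
  obtain ⟨q0, hq0⟩ := hconn s2 t2
  show psi (jsgAdj adj) (jsgCost c cbar cs Z) (s1, s2) (t1, t2) ≤ _
  simp only [psi]
  refine le_sInf_add_sInf ⟨_, p0, hp0, rfl⟩ ⟨_, q0, hq0, rfl⟩ ?_
  rintro x ⟨p, hp, rfl⟩ y ⟨q, hq, rfl⟩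
  obtain ⟨h1p, h1c⟩ := lift_fst (c := c) (cbar := cbar) (cs := cs) (Z := Z) hc p s2 hp
  obtain ⟨h2p, h2c⟩ := lift_snd (c := c) (cbar := cbar) (cs := cs) (Z := Z) hc q t1 hq
  have hpath := isPath_append _ _ h1p h2p
  have hle := psi_le_cost (adj := jsgAdj adj) hJ hpath
  rw [pathCost_append] at hle
  exact hle.trans (add_le_add h1c h2c)

lemma jsgDist_triangle (hconn : StronglyConnected adj) (hc : ∀ i j, 0 ≤ c i j)
    (hcbar : ∀ i j, 0 ≤ cbar i j) (hcs : 0 ≤ cs) (a b d : V × V) :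
    jsgDist adj c cbar cs Z a d ≤
      jsgDist adj c cbar cs Z a b + jsgDist adj c cbar cs Z b d := by
  have hJ := jsgCost_nonneg (c := c) (cbar := cbar) (cs := cs) (Z := Z) hc hcbar hcs
  exact psi_triangle hJ (joint_exists hconn hc a b) (joint_exists hconn hc b d)

lemma jsgDist_le_W (hconn : StronglyConnected adj) (hc : ∀ i j, 0 ≤ c i j)
    (hcbar : ∀ i j, 0 ≤ cbar i j) (hcs : 0 ≤ cs) (s t : V × V) :
    jsgDist adj c cbar cs Z s t ≤ W adj c cbar cs Z s t := by
  have hJ := jsgCost_nonneg (c := c) (cbar := cbar) (cs := cs) (Z := Z) hc hcbar hcs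
  have hpsi := jsgDist_le_psi_add (Z := Z) hconn hc hcbar hcs s t
  unfold W
  split_ifs with h1 h2
  · refine le_min ?_ hpsi
    have hpath : IsPath (jsgAdj adj) s t [(s, t)] :=
      ⟨rfl, ⟨Or.inl h1.1.symm, Or.inr h1.2.1⟩, rfl⟩
    have hle := psi_le_cost (adj := jsgAdj adj) hJ hpath
    rw [pathCost_cons] at hle
    refine hle.trans ?_
    have hcost : jsgCost c cbar cs Z s t ≤ cbar s.2 t.2 + cs := by
      by_cases h22 : s.2 = t.2
      · have he : jsgCost c cbar cs Z s t = 0 := by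
          unfold jsgCost; rw [if_pos ⟨h1.1, h22⟩]
        rw [he]; exact add_nonneg (hcbar _ _) hcs
      · have he : jsgCost c cbar cs Z s t
            = min (c s.2 t.2) (cbar s.2 t.2 + cs) := by
          unfold jsgCost
          rw [if_neg (fun hh => h22 hh.2), if_pos h1.1, if_pos h1.2.2]
        rw [he]; exact min_le_right _ _
    simp [pathCost]
    linarith
  · refine le_min ?_ hpsi
    have hpath : IsPath (jsgAdj adj) s t [(s, t)] :=
      ⟨rfl, ⟨Or.inr h2.2.1, Or.inl h2.1.symm⟩, rfl⟩
    have hle := psi_le_cost (adj := jsgAdj adj) hJ hpath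
    rw [pathCost_cons] at hle
    refine hle.trans ?_
    have hcost : jsgCost c cbar cs Z s t ≤ cbar s.1 t.1 + cs := by
      by_cases h11 : s.1 = t.1
      · have he : jsgCost c cbar cs Z s t = 0 := by
          unfold jsgCost; rw [if_pos ⟨h11, h2.1⟩]
        rw [he]; exact add_nonneg (hcbar _ _) hcs
      · have he : jsgCost c cbar cs Z s t
            = min (c s.1 t.1) (cbar s.1 t.1 + cs) := by
          unfold jsgCost
          rw [if_neg (fun hh => h11 hh.1), if_neg h11, if_pos h2.1, if_pos h2.2.2]
        rw [he]; exact min_le_right _ _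
    simp [pathCost]
    linarith
  · exact hpsi

lemma W_le_psi_add (s t : V × V) :
    W adj c cbar cs Z s t ≤ psi adj c s.1 t.1 + psi adj c s.2 t.2 := by
  unfold W
  split_ifs <;> first | exact min_le_right _ _ | exact le_rfl

lemma W_nonneg (hconn : StronglyConnected adj) (hc : ∀ i j, 0 ≤ c i j)
    (hcbar : ∀ i j, 0 ≤ cbar i j) (hcs : 0 ≤ cs) (s t : V × V) :
    0 ≤ W adj c cbar cs Z s t := by
  have h1 : 0 ≤ psi adj c s.1 t.1 + psi adj c s.2 t.2 :=
    add_nonneg (psi_nonneg hc (hconn _ _)) (psi_nonneg hc (hconn _ _))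
  unfold W
  split_ifs <;>
    first
      | exact le_min (add_nonneg (hcbar _ _) hcs) h1
      | exact h1

lemma Q_cons (e : (V × V) × (V × V)) (u : List ((V × V) × (V × V))) :
    Q c cbar cs Z (e :: u) = jsgCost c cbar cs Z e.1 e.2 + Q c cbar cs Z u := by
  simp [Q]

lemma Wcost_cons (e : (V × V) × (V × V)) (u : List ((V × V) × (V × V))) :
    Wcost adj c cbar cs Z (e :: u)
      = W adj c cbar cs Z e.1 e.2 + Wcost adj c cbar cs Z u := by
  simp [Wcost]

lemma edge_class (hc : ∀ i j, 0 ≤ c i j) {s t : V × V} (h : jsgAdj adj s t) :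
    psi adj c s.1 t.1 + psi adj c s.2 t.2 ≤ jsgCost c cbar cs Z s t ∨
    (Critical adj Z s ∧ Critical adj Z t ∧
      W adj c cbar cs Z s t ≤ jsgCost c cbar cs Z s t) := by
  by_cases h11 : s.1 = t.1
  · by_cases h22 : s.2 = t.2
    · left
      have e1 : psi adj c s.1 t.1 = 0 := by rw [h11]; exact psi_self hc _
      have e2 : psi adj c s.2 t.2 = 0 := by rw [h22]; exact psi_self hc _
      have e3 : jsgCost c cbar cs Z s t = 0 := by
        unfold jsgCost; rw [if_pos ⟨h11, h22⟩]
      rw [e1, e2, e3]; norm_num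
    · have hadj2 : adj s.2 t.2 := h.2.resolve_left (fun he => h22 he.symm)
      have e1 : psi adj c s.1 t.1 = 0 := by rw [h11]; exact psi_self hc _
      by_cases hz : s.1 ∈ Z s.2 t.2
      · right
        have hrisky : Risky adj Z s.2 t.2 := ⟨hadj2, ⟨s.1, hz⟩⟩
        have hts : t = (s.1, t.2) := by rw [h11]
        refine ⟨⟨s.2, t.2, s.1, hrisky, hz, Or.inl rfl⟩,
          ⟨s.2, t.2, s.1, hrisky, hz, Or.inr (Or.inl hts)⟩, ?_⟩
        have hW : W adj c cbar cs Z s t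
            = min (cbar s.2 t.2 + cs) (psi adj c s.1 t.1 + psi adj c s.2 t.2) := by
          unfold W; rw [if_pos ⟨h11, hadj2, hz⟩]
        have hjc : jsgCost c cbar cs Z s t
            = min (c s.2 t.2) (cbar s.2 t.2 + cs) := by
          unfold jsgCost
          rw [if_neg (fun hh => h22 hh.2), if_pos h11, if_pos hz]
        rw [hW, hjc]
        refine le_min ?_ (min_le_left _ _)
        calc min (cbar s.2 t.2 + cs) (psi adj c s.1 t.1 + psi adj c s.2 t.2)
            ≤ psi adj c s.1 t.1 + psi adj c s.2 t.2 := min_le_right _ _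
          _ ≤ c s.2 t.2 := by
              have := psi_le_edge hc hadj2; rw [e1]; linarith
      · left
        have e3 : jsgCost c cbar cs Z s t = c s.2 t.2 := by
          unfold jsgCost
          rw [if_neg (fun hh => h22 hh.2), if_pos h11, if_neg hz]
        rw [e1, e3]
        have := psi_le_edge hc hadj2; linarith
  · have hadj1 : adj s.1 t.1 := h.1.resolve_left (fun he => h11 he.symm)
    by_cases h22 : s.2 = t.2
    · have e2 : psi adj c s.2 t.2 = 0 := by rw [h22]; exact psi_self hc _
      by_cases hz : s.2 ∈ Z s.1 t.1
      · right
        have hrisky : Risky adj Z s.1 t.1 := ⟨hadj1, ⟨s.2, hz⟩⟩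
        have hts : t = (t.1, s.2) := by rw [h22]
        refine ⟨⟨s.1, t.1, s.2, hrisky, hz, Or.inr (Or.inr (Or.inl rfl))⟩,
          ⟨s.1, t.1, s.2, hrisky, hz, Or.inr (Or.inr (Or.inr hts))⟩, ?_⟩
        have hW : W adj c cbar cs Z s t
            = min (cbar s.1 t.1 + cs) (psi adj c s.1 t.1 + psi adj c s.2 t.2) := by
          unfold W
          rw [if_neg (fun hh => h11 hh.1), if_pos ⟨h22, hadj1, hz⟩]
        have hjc : jsgCost c cbar cs Z s t
            = min (c s.1 t.1) (cbar s.1 t.1 + cs) := by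
          unfold jsgCost
          rw [if_neg (fun hh => h11 hh.1), if_neg h11, if_pos h22, if_pos hz]
        rw [hW, hjc]
        refine le_min ?_ (min_le_left _ _)
        calc min (cbar s.1 t.1 + cs) (psi adj c s.1 t.1 + psi adj c s.2 t.2)
            ≤ psi adj c s.1 t.1 + psi adj c s.2 t.2 := min_le_right _ _
          _ ≤ c s.1 t.1 := by
              have := psi_le_edge hc hadj1; rw [e2]; linarith
      · left
        have e3 : jsgCost c cbar cs Z s t = c s.1 t.1 := by
          unfold jsgCost
          rw [if_neg (fun hh => h11 hh.1), if_neg h11, if_pos h22, if_neg hz]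
        rw [e2, e3]
        have := psi_le_edge hc hadj1; linarith
    · left
      have hadj2 : adj s.2 t.2 := h.2.resolve_left (fun he => h22 he.symm)
      have e3 : jsgCost c cbar cs Z s t = c s.1 t.1 + c s.2 t.2 := by
        unfold jsgCost
        rw [if_neg (fun hh => h11 hh.1), if_neg h11, if_neg h22]
      rw [e3]
      exact add_le_add (psi_le_edge hc hadj1) (psi_le_edge hc hadj2)

lemma dec_aux (vstart vgoal : V) (hconn : StronglyConnected adj)
    (hc : ∀ i j, 0 ≤ c i j) :
    ∀ (u : List ((V × V) × (V × V))) (s m : V × V) (acc : ℝ),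
      IsPath (jsgAdj adj) s (vgoal, vgoal) u →
      m ∈ Mset adj Z vstart vgoal →
      psi adj c m.1 s.1 + psi adj c m.2 s.2 ≤ acc →
      ∃ uhat, IsPath (cjsgAdj adj Z vstart vgoal) m (vgoal, vgoal) uhat ∧
        Wcost adj c cbar cs Z uhat ≤ acc + Q c cbar cs Z u := by
  intro u
  induction u with
  | nil =>
    intro s m acc hu hm hacc
    have hs : s = (vgoal, vgoal) := hu
    subst hs
    refine ⟨[(m, (vgoal, vgoal))], ⟨rfl, ⟨hm, Or.inr (Or.inr rfl)⟩, rfl⟩, ?_⟩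
    have h1 := W_le_psi_add (adj := adj) (c := c) (cbar := cbar) (cs := cs)
      (Z := Z) m (vgoal, vgoal)
    have h2 : Q c cbar cs Z [] = 0 := rfl
    have h3 : Wcost adj c cbar cs Z [(m, (vgoal, vgoal))]
        = W adj c cbar cs Z m (vgoal, vgoal) := by simp [Wcost]
    rw [h3, h2]
    linarith
  | cons e rest ih =>
    intro s m acc hu hm hacc
    obtain ⟨he1, hadj, hrest⟩ := hu
    subst he1
    rcases edge_class (cbar := cbar) (cs := cs) (Z := Z) hc hadj with
      hl | ⟨hcrs, hcrt, hW⟩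
    · have htri1 : psi adj c m.1 e.2.1 ≤ psi adj c m.1 e.1.1 + psi adj c e.1.1 e.2.1 :=
        psi_triangle hc (hconn _ _) (hconn _ _)
      have htri2 : psi adj c m.2 e.2.2 ≤ psi adj c m.2 e.1.2 + psi adj c e.1.2 e.2.2 :=
        psi_triangle hc (hconn _ _) (hconn _ _)
      obtain ⟨uhat, hp, hb⟩ := ih e.2 m (acc + jsgCost c cbar cs Z e.1 e.2) hrest hm
        (by linarith)
      refine ⟨uhat, hp, ?_⟩
      rw [Q_cons]
      linarith
    · obtain ⟨uhat, hp, hb⟩ := ih e.2 e.2 0 hrest (Or.inl hcrt)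
        (by simp [psi_self hc])
      refine ⟨(m, e.1) :: (e.1, e.2) :: uhat,
        ⟨rfl, ⟨hm, Or.inl hcrs⟩, rfl, ⟨Or.inl hcrs, Or.inl hcrt⟩, hp⟩, ?_⟩
      have hWm := W_le_psi_add (adj := adj) (c := c) (cbar := cbar) (cs := cs)
        (Z := Z) m e.1
      rw [Wcost_cons, Wcost_cons, Q_cons]
      linarith

lemma wcost_ge (vstart vgoal : V) (hconn : StronglyConnected adj)
    (hc : ∀ i j, 0 ≤ c i j) (hcbar : ∀ i j, 0 ≤ cbar i j) (hcs : 0 ≤ cs) :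
    ∀ (u : List ((V × V) × (V × V))) (a : V × V),
      IsPath (cjsgAdj adj Z vstart vgoal) a (vgoal, vgoal) u →
      jsgDist adj c cbar cs Z a (vgoal, vgoal) ≤ Wcost adj c cbar cs Z u := by
  intro u
  induction u with
  | nil =>
    intro a h
    have ha : a = (vgoal, vgoal) := h
    subst ha
    have hJ := jsgCost_nonneg (c := c) (cbar := cbar) (cs := cs) (Z := Z)
      hc hcbar hcs
    have h0 : jsgDist adj c cbar cs Z (vgoal, vgoal) (vgoal, vgoal) = 0 :=
      psi_self hJ _
    rw [h0]
    simp [Wcost]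
  | cons e rest ih =>
    intro a h
    obtain ⟨he1, hadj, hrest⟩ := h
    subst he1
    have h1 := jsgDist_triangle (Z := Z) hconn hc hcbar hcs e.1 e.2 (vgoal, vgoal)
    have h2 := jsgDist_le_W (Z := Z) hconn hc hcbar hcs e.1 e.2
    have h3 := ih e.2 hrest
    rw [Wcost_cons]
    linarith

end Helpers

/-- Lemma 2(ii): for any optimal joint path u* on the JSG there is a path on
the CJSG with the same cost; consequently `Q(u†) ≤ Q(u*)`. -/
theorem cjsg_matches_optimal (adj : V → V → Prop) (c cbar : V → V → ℝ)
    (cs : ℝ) (Z : V → V → Set V) (vstart vgoal : V)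
    (hconn : StronglyConnected adj) (hc : ∀ i j, 0 ≤ c i j)
    (hcbar : ∀ i j, 0 ≤ cbar i j) (hcs : 0 ≤ cs)
    (ustar : List ((V × V) × (V × V)))
    (hustar : IsPath (jsgAdj adj) (vstart, vstart) (vgoal, vgoal) ustar)
    (hopt : Q c cbar cs Z ustar = Qstar adj c cbar cs Z vstart vgoal) :
    (∃ uhat, IsPath (cjsgAdj adj Z vstart vgoal)
        (vstart, vstart) (vgoal, vgoal) uhat ∧
        Wcost adj c cbar cs Z uhat = Q c cbar cs Z ustar) ∧
    cjsgOpt adj c cbar cs Z vstart vgoal ≤ Q c cbar cs Z ustar := by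
  obtain ⟨uhat, hpath, hb⟩ := dec_aux (cbar := cbar) (cs := cs) (Z := Z)
    vstart vgoal hconn hc ustar (vstart, vstart) (vstart, vstart) 0 hustar
    (Or.inr (Or.inl rfl))
    (by simp [psi_self hc])
  have hge : Q c cbar cs Z ustar ≤ Wcost adj c cbar cs Z uhat := by
    have h := wcost_ge vstart vgoal hconn hc hcbar hcs uhat (vstart, vstart) hpath
    rw [hopt]
    exact h
  have heq : Wcost adj c cbar cs Z uhat = Q c cbar cs Z ustar :=
    le_antisymm (by linarith) hge
  refine ⟨⟨uhat, hpath, heq⟩, ?_⟩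
  have hbdd : BddBelow {x | ∃ u, IsPath (cjsgAdj adj Z vstart vgoal)
      (vstart, vstart) (vgoal, vgoal) u ∧ Wcost adj c cbar cs Z u = x} := by
    refine ⟨0, ?_⟩
    rintro x ⟨u, -, rfl⟩
    exact pathCost_nonneg (fun s t => W_nonneg hconn hc hcbar hcs s t) u
  exact csInf_le hbdd ⟨uhat, hpath, heq⟩
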